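/- arXiv:2009.01290 — 3 statements merged into one kernel-verified Lean document; each statement's English description precedes it below -/
import Mathlib

section
/- For 0 < m < n, the fundamental de la Vallée Poussin polynomials Φ_{n,k}^m(x) = λ_k ∑_{j=0}^{n+m−1} μ_{n,j}^m p_j(x_k) p_j(x), with μ_{n,j}^m = 1 for 0 ≤ j ≤ n−m and μ_{n,j}^m = (n+m−j)/(2m) for n−m < j < n+m, satisfy the interpolation property Φ_{n,k}^m(x_h) = δ_{h,k} for all h, k ∈ {1,…,n}. -/
/-- Orthonormal Chebyshev polynomial of the second kind (trigonometric form). -/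
noncomputable def chebP (n : ℕ) (x : ℝ) : ℝ :=
  Real.sqrt (2 / Real.pi) * Real.sin ((n + 1) * Real.arccos x) / Real.sin (Real.arccos x)

/-- Chebyshev nodes of the second kind: zeros of `chebP n`. -/
noncomputable def chebNode (n k : ℕ) : ℝ := Real.cos (k * Real.pi / (n + 1))

/-- Christoffel numbers for the weight √(1-x²). -/
noncomputable def chebWeight (n k : ℕ) : ℝ :=
  Real.pi / (n + 1) * Real.sin (k * Real.pi / (n + 1)) ^ 2

/-- The de la Vallée Poussin filter coefficients. -/
noncomputable def vpFilter (n m j : ℕ) : ℝ :=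
  if j ≤ n - m then 1 else ((n : ℝ) + m - j) / (2 * m)

/-- The fundamental VP polynomials. -/
noncomputable def vpPhi (n m k : ℕ) (x : ℝ) : ℝ :=
  chebWeight n k *
    ∑ j ∈ Finset.range (n + m), vpFilter n m j * chebP j (chebNode n k) * chebP j x

/-!
At the node `x_h = cos θ_h`, `θ_h = hπ/(n+1)`, one has `p_j(x_h) = √(2/π) sin((j+1)θ_h) / sin θ_h`,
so `Φ_{n,k}^m(x_h)` is a multiple of `∑_j μ_j g(j)` with `g(j) = sin((j+1)θ_h) sin((j+1)θ_k)`.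
The sequence `g` is even about `j = n` and vanishes there, while `μ_j - [j < n]` is odd about `n`
on the window where the filter is neither `0` nor `1`; hence the filtered sum equals the plain
sum `∑_{j<n} g(j)`. Discrete orthogonality of the sines, obtained by folding in half a full-period
sum of cosines at roots of unity, evaluates the latter to `(n+1)/2 · δ_{hk}`.
-/

open Finset Real

theorem sum_range_cos_two_pi_mul_div_eq_zero (M : ℕ) {p : ℤ} (hp : ¬ (M : ℤ) ∣ p) :
    ∑ t ∈ range M, cos (2 * π * p / M * t) = 0 := by
  rcases M.eq_zero_or_pos with rfl | hM
  · simp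
  have hsin : sin (2 * π * p / M / 2) ≠ 0 := by
    rw [Ne, sin_eq_zero_iff]
    rintro ⟨q, hq⟩
    have : (p : ℝ) = M * q := by
      field_simp at hq
      linarith
    exact hp ⟨q, by exact_mod_cast this⟩
  have hsum := sin_mul_sum_cos M (2 * π * p / M) 0
  have hzero : sin (M * (2 * π * p / M) / 2) = 0 := by
    rw [show (M : ℝ) * (2 * π * p / M) / 2 = p * π by field_simp]
    exact sin_int_mul_pi p
  simp only [add_zero, hzero, zero_mul] at hsum
  exact (mul_eq_zero.mp hsum).resolve_left hsin

theorem sum_range_two_mul_add_one_of_symm {M : Type*} [AddCommMonoid M] {n : ℕ} {f : ℕ → M}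
    (hf : ∀ s ≤ n, f (n + s) = f (n - s)) :
    ∑ j ∈ range (2 * n + 1), f j = 2 • ∑ j ∈ range n, f j + f n := by
  have hupper : ∑ s ∈ range (n + 1), f (n + s) = ∑ j ∈ range (n + 1), f j := by
    rw [sum_congr rfl fun s hs => hf s (Nat.lt_succ_iff.mp (mem_range.mp hs))]
    simpa using sum_range_reflect f (n + 1)
  rw [show 2 * n + 1 = n + (n + 1) by ring, sum_range_add, hupper, sum_range_succ, two_nsmul,
    add_assoc]

theorem sum_Ico_eq_zero_of_antisymm {f : ℕ → ℝ} {c r : ℕ} (hrc : r ≤ c)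
    (hf : ∀ s ≤ r, f (c + s) = -f (c - s)) :
    ∑ j ∈ Ico (c - r) (c + r + 1), f j = 0 := by
  have hreflect : ∀ j ∈ Ico (c - r) (c + r + 1), f (2 * c - j) = -f j := by
    intro j hj
    rw [mem_Ico] at hj
    rcases le_total c j with hcj | hjc
    · obtain ⟨s, rfl⟩ := Nat.exists_eq_add_of_le hcj
      rw [show 2 * c - (c + s) = c - s by omega, hf s (by omega), neg_neg]
    · have := hf (c - j) (by omega)
      rwa [show c + (c - j) = 2 * c - j by omega, show c - (c - j) = j by omega] at this
  have h := sum_Ico_reflect f (c - r) (n := 2 * c) (m := c + r + 1) (by omega)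
  rw [show 2 * c + 1 - (c + r + 1) = c - r by omega, show 2 * c + 1 - (c - r) = c + r + 1 by omega,
    sum_congr rfl hreflect, sum_neg_distrib] at h
  linarith

theorem sum_range_vpFilter_mul {n m : ℕ} (hm : 0 < m) (hmn : m ≤ n) {g : ℕ → ℝ}
    (hg : ∀ s < m, g (n + s) = g (n - s)) (hgn : g n = 0) :
    ∑ j ∈ range (n + m), vpFilter n m j * g j = ∑ j ∈ range n, g j := by
  set d : ℕ → ℝ := fun j => (vpFilter n m j - if j < n then 1 else 0) * g j with hd
  have htrunc : ∑ j ∈ range (n + m), (if j < n then 1 else 0) * g j = ∑ j ∈ range n, g j := by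
    have htail : ∑ s ∈ range m, (if n + s < n then 1 else 0) * g (n + s) = 0 :=
      sum_eq_zero fun s _ => by rw [if_neg (by omega), zero_mul]
    rw [sum_range_add, htail, add_zero]
    exact sum_congr rfl fun j hj => by rw [if_pos (mem_range.mp hj), one_mul]
  have hlow : ∀ j ∈ range (n - m + 1), d j = 0 := fun j hj => by
    have hj : j ≤ n - m := Nat.lt_succ_iff.mp (mem_range.mp hj)
    simp only [hd, vpFilter, if_pos hj, if_pos (by omega : j < n), sub_self, zero_mul]
  have hwindow : ∀ s ≤ m - 1, d (n + s) = -d (n - s) := fun s hs => by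
    rcases Nat.eq_zero_or_pos s with rfl | hs0
    · simp [hd, hgn]
    have hm' : (0 : ℝ) < m := by exact_mod_cast hm
    simp only [hd, vpFilter, if_neg (by omega : ¬n + s ≤ n - m), if_neg (by omega : ¬n + s < n),
      if_neg (by omega : ¬n - s ≤ n - m), if_pos (by omega : n - s < n), hg s (by omega),
      Nat.cast_sub (by omega : s ≤ n)]
    push_cast
    field_simp
    ring
  have hd0 : ∑ j ∈ range (n + m), d j = 0 := by
    rw [← sum_range_add_sum_Ico _ (by omega : n - m + 1 ≤ n + m), sum_eq_zero hlow, zero_add]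
    have := sum_Ico_eq_zero_of_antisymm (by omega : m - 1 ≤ n) hwindow
    rwa [show n - (m - 1) = n - m + 1 by omega, show n + (m - 1) + 1 = n + m by omega] at this
  calc ∑ j ∈ range (n + m), vpFilter n m j * g j
      = ∑ j ∈ range (n + m), d j + ∑ j ∈ range (n + m), (if j < n then 1 else 0) * g j := by
        rw [← sum_add_distrib]
        exact sum_congr rfl fun j _ => by simp only [hd]; ring
    _ = ∑ j ∈ range n, g j := by rw [hd0, htrunc, zero_add]

noncomputable def nodeAngle (n l : ℕ) : ℝ := l * π / (n + 1)

theorem succ_mul_nodeAngle (n l : ℕ) : (n + 1) * nodeAngle n l = l * π := by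
  rw [nodeAngle]
  field_simp

theorem sin_nodeAngle_pos {n l : ℕ} (hl : 1 ≤ l) (hln : l ≤ n) : 0 < sin (nodeAngle n l) := by
  apply sin_pos_of_pos_of_lt_pi
  · rw [nodeAngle]
    have : (0 : ℝ) < l := by exact_mod_cast hl
    positivity
  · rw [nodeAngle, div_lt_iff₀ (by positivity)]
    have : (l : ℝ) < n + 1 := by exact_mod_cast Nat.lt_succ_of_le hln
    nlinarith [pi_pos]

theorem sin_succ_add_mul_nodeAngle (n l : ℕ) (x : ℝ) :
    sin ((n + 1 + x) * nodeAngle n l) = -sin ((n + 1 - x) * nodeAngle n l) := by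
  rw [add_mul, sub_mul, succ_mul_nodeAngle, sin_add, sin_sub, sin_nat_mul_pi]
  ring

theorem sum_range_sin_mul_sin_nodeAngle {n h k : ℕ} (h1 : 1 ≤ h) (hn : h ≤ n) (k1 : 1 ≤ k)
    (kn : k ≤ n) :
    ∑ t ∈ range (2 * (n + 1)), sin (t * nodeAngle n h) * sin (t * nodeAngle n k) =
      if h = k then (n + 1 : ℝ) else 0 := by
  have hprod : ∀ t : ℕ, sin (t * nodeAngle n h) * sin (t * nodeAngle n k) =
      (cos (2 * π * ((h - k : ℤ) : ℝ) / (2 * (n + 1) : ℕ) * t) -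
        cos (2 * π * ((h + k : ℤ) : ℝ) / (2 * (n + 1) : ℕ) * t)) / 2 := by
    intro t
    have hsub : 2 * π * ((h - k : ℤ) : ℝ) / (2 * (n + 1) : ℕ) * t =
        t * nodeAngle n h - t * nodeAngle n k := by
      rw [nodeAngle, nodeAngle]; push_cast; field_simp
    have hadd : 2 * π * ((h + k : ℤ) : ℝ) / (2 * (n + 1) : ℕ) * t =
        t * nodeAngle n h + t * nodeAngle n k := by
      rw [nodeAngle, nodeAngle]; push_cast; field_simp
    rw [hsub, hadd, cos_sub, cos_add]
    ring
  have hadd_ndvd : ¬ ((2 * (n + 1) : ℕ) : ℤ) ∣ (h + k : ℤ) := fun hdvd => by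
    have := Int.eq_zero_of_abs_lt_dvd hdvd (abs_lt.mpr ⟨by omega, by omega⟩)
    omega
  rw [sum_congr rfl fun t _ => hprod t, ← sum_div, sum_sub_distrib,
    sum_range_cos_two_pi_mul_div_eq_zero _ hadd_ndvd, sub_zero]
  split_ifs with hhk
  · subst hhk
    simp
  · have hsub_ndvd : ¬ ((2 * (n + 1) : ℕ) : ℤ) ∣ (h - k : ℤ) := fun hdvd => by
      have := Int.eq_zero_of_abs_lt_dvd hdvd (abs_lt.mpr ⟨by omega, by omega⟩)
      omega
    rw [sum_range_cos_two_pi_mul_div_eq_zero _ hsub_ndvd, zero_div]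

noncomputable def nodeSinProd (n h k j : ℕ) : ℝ :=
  sin ((j + 1) * nodeAngle n h) * sin ((j + 1) * nodeAngle n k)

theorem nodeSinProd_symm (n h k : ℕ) {s : ℕ} (hs : s ≤ n) :
    nodeSinProd n h k (n + s) = nodeSinProd n h k (n - s) := by
  have hup : ((n + s : ℕ) : ℝ) + 1 = n + 1 + s := by push_cast; ring
  have hdown : ((n - s : ℕ) : ℝ) + 1 = n + 1 - s := by push_cast [hs]; ring
  rw [nodeSinProd, nodeSinProd, hup, hdown, sin_succ_add_mul_nodeAngle,
    sin_succ_add_mul_nodeAngle, neg_mul_neg]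

theorem nodeSinProd_self (n h k : ℕ) : nodeSinProd n h k n = 0 := by
  rw [nodeSinProd, succ_mul_nodeAngle, sin_nat_mul_pi, zero_mul]

theorem sum_range_nodeSinProd {n h k : ℕ} (h1 : 1 ≤ h) (hn : h ≤ n) (k1 : 1 ≤ k) (kn : k ≤ n) :
    ∑ j ∈ range n, nodeSinProd n h k j = if h = k then ((n : ℝ) + 1) / 2 else 0 := by
  have hfold := sum_range_two_mul_add_one_of_symm (f := nodeSinProd n h k)
    fun s hs => nodeSinProd_symm n h k hs
  rw [nodeSinProd_self, add_zero] at hfold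
  have hshift : ∑ t ∈ range (2 * (n + 1)), sin (t * nodeAngle n h) * sin (t * nodeAngle n k) =
      ∑ j ∈ range (2 * n + 1), nodeSinProd n h k j := by
    rw [show 2 * (n + 1) = 2 * n + 1 + 1 by ring, sum_range_succ']
    simp [nodeSinProd]
  have hfull := sum_range_sin_mul_sin_nodeAngle h1 hn k1 kn
  rw [hshift, hfold, two_nsmul] at hfull
  split_ifs at hfull ⊢ <;> linarith

theorem chebP_chebNode (j : ℕ) {n l : ℕ} (hln : l ≤ n + 1) :
    chebP j (chebNode n l) = √(2 / π) * sin ((j + 1) * nodeAngle n l) / sin (nodeAngle n l) := by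
  have hθ : nodeAngle n l ≤ π := by
    rw [nodeAngle, div_le_iff₀ (by positivity)]
    have : (l : ℝ) ≤ n + 1 := by exact_mod_cast hln
    nlinarith [pi_pos]
  rw [chebP, chebNode, ← nodeAngle, arccos_cos (by rw [nodeAngle]; positivity) hθ]

theorem chebP_mul_chebP_chebNode (j : ℕ) {n h k : ℕ} (hh : h ≤ n + 1) (hk : k ≤ n + 1) :
    chebP j (chebNode n h) * chebP j (chebNode n k) =
      2 / π / (sin (nodeAngle n h) * sin (nodeAngle n k)) * nodeSinProd n h k j := by
  rw [chebP_chebNode j hh, chebP_chebNode j hk, nodeSinProd]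
  calc _ = √(2 / π) * √(2 / π) / (sin (nodeAngle n h) * sin (nodeAngle n k)) *
        (sin ((j + 1) * nodeAngle n h) * sin ((j + 1) * nodeAngle n k)) := by ring
    _ = _ := by rw [mul_self_sqrt (by positivity)]

theorem vpPhi_interpolation (n m : ℕ) (hm : 0 < m) (hmn : m < n) :
    ∀ h k, 1 ≤ h → h ≤ n → 1 ≤ k → k ≤ n →
      vpPhi n m k (chebNode n h) = if h = k then 1 else 0 := by
  intro h k h1 hn k1 kn
  have hsin_k := (sin_nodeAngle_pos k1 kn).ne'
  calc vpPhi n m k (chebNode n h)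
      = π / (n + 1) * sin (nodeAngle n k) ^ 2 *
          (2 / π / (sin (nodeAngle n k) * sin (nodeAngle n h))) *
          ∑ j ∈ range (n + m), vpFilter n m j * nodeSinProd n k h j := by
        rw [vpPhi, mul_assoc _ (2 / π / _), mul_sum _ _ (2 / π / _)]
        congr 1
        exact sum_congr rfl fun j _ => by
          rw [mul_assoc, chebP_mul_chebP_chebNode j (by omega) (by omega)]
          ring
    _ = π / (n + 1) * sin (nodeAngle n k) ^ 2 *
          (2 / π / (sin (nodeAngle n k) * sin (nodeAngle n h))) *
          (if k = h then ((n : ℝ) + 1) / 2 else 0) := by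
        rw [sum_range_vpFilter_mul hm hmn.le (fun s hs => nodeSinProd_symm n k h (by omega))
          (nodeSinProd_self n k h), sum_range_nodeSinProd k1 kn h1 hn]
    _ = if h = k then 1 else 0 := by
        rcases eq_or_ne h k with rfl | hhk
        · rw [if_pos rfl, if_pos rfl]
          field_simp
        · simp [hhk, hhk.symm]
end

section
/- For 0 < m < n, the polynomials q_{n,j}^m, defined by q_{n,j}^m = p_j for 0 ≤ j ≤ n−m and q_{n,j}^m = ((m+n−j)/(2m)) p_j − ((m−n+j)/(2m)) p_{2n−j} for n−m < j < n, are pairwise orthogonal with respect to the inner product ⟨f,g⟩ = ∫_{−1}^{1} f(x)g(x)√(1−x²) dx, with ⟨q_{n,j}^m, q_{n,j}^m⟩ = 1 for 0 ≤ j ≤ n−m and ⟨q_{n,j}^m, q_{n,j}^m⟩ = (m² + (n−j)²)/(2m²) for n−m < j < n. -/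
/-- The VP orthogonal basis polynomials `q_{n,j}^m`. -/
noncomputable def vpQ (n m j : ℕ) (x : ℝ) : ℝ :=
  if j ≤ n - m then chebP j x
  else ((m : ℝ) + n - j) / (2 * m) * chebP j x - ((m : ℝ) - n + j) / (2 * m) * chebP (2 * n - j) x

/-- The modified VP basis polynomials `q̃_{n,j}^m`. -/
noncomputable def vpQt (n m j : ℕ) (x : ℝ) : ℝ :=
  if j ≤ n - m then chebP j x / (j + 1)
  else ((m : ℝ) + n - j) / (2 * m) * (chebP j x / (j + 1)) -
    ((m : ℝ) - n + j) / (2 * m) * (chebP (2 * n - j) x / (2 * (n : ℝ) - j + 1))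

/-- The inner product with Chebyshev weight of the second kind. -/
noncomputable def iprod (f g : ℝ → ℝ) : ℝ :=
  ∫ x in (-1 : ℝ)..1, f x * g x * Real.sqrt (1 - x ^ 2)

/-! The substitution `x = cos θ` turns the weight `√(1 - x²) dx` into `sin² θ dθ` on `[0, π]`
and `p_k(cos θ) sin θ` into `√(2/π) sin((k+1)θ)`, so orthonormality of the `p_k` is that of the
sines on `[0, π]`. Each `q_j` is a combination of `p_j` and `p_{2n-j}` only, and `2n - j > n`
keeps the second index away from every index below `n`: distinct `q_i, q_j` involve disjoint sets
of `p_k`, and `⟨q_j, q_j⟩` is the sum of the squared coefficients. -/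

open Real Set intervalIntegral Polynomial.Chebyshev

lemma integral_cos_int_mul (k : ℤ) :
    ∫ θ in 0..π, cos (k * θ) = if k = 0 then π else 0 := by
  split_ifs with hk
  · simp [hk]
  · rw [integral_comp_mul_left (fun θ => cos θ) (Int.cast_ne_zero.mpr hk)]
    simp [sin_int_mul_pi]

lemma integral_sin_mul_sin (a b : ℕ) :
    ∫ θ in 0..π, sin ((a + 1) * θ) * sin ((b + 1) * θ) = if a = b then π / 2 else 0 := by
  have product_to_sum : ∀ θ : ℝ, sin ((a + 1) * θ) * sin ((b + 1) * θ) =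
      (cos (((a - b : ℤ) : ℝ) * θ) - cos (((a + b + 2 : ℤ) : ℝ) * θ)) / 2 := fun θ => by
    push_cast
    rw [show ((a : ℝ) - b) * θ = (a + 1) * θ - (b + 1) * θ by ring,
      show ((a : ℝ) + b + 2) * θ = (a + 1) * θ + (b + 1) * θ by ring, cos_sub, cos_add]
    ring
  simp_rw [product_to_sum]
  rw [integral_div, integral_sub (Continuous.intervalIntegrable (by fun_prop) _ _)
    (Continuous.intervalIntegrable (by fun_prop) _ _), integral_cos_int_mul,
    integral_cos_int_mul, if_neg (show (a + b + 2 : ℤ) ≠ 0 by omega)]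
  simp only [sub_eq_zero, Nat.cast_inj]
  split_ifs <;> ring

lemma integral_mul_sqrt_one_sub_sq_eq_integral_cos (h : ℝ → ℝ) :
    ∫ x in -1..1, h x * √(1 - x ^ 2) = ∫ θ in 0..π, h (cos θ) * sin θ ^ 2 := by
  calc ∫ x in -1..1, h x * √(1 - x ^ 2)
      = ∫ x in -1..1, (h x * (1 - x ^ 2)) * √(1 - x ^ 2)⁻¹ :=
        integral_congr fun x _ => by rw [mul_assoc, sqrt_inv, ← div_eq_mul_inv, div_sqrt]
    _ = ∫ θ in 0..π, h (cos θ) * sin θ ^ 2 := by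
        rw [← integral_measureT, integral_measureT_eq_integral_cos]
        simp_rw [sin_sq]

lemma chebP_cos_mul_sin (k : ℕ) {θ : ℝ} (hθ : θ ∈ Icc 0 π) :
    chebP k (cos θ) * sin θ = √(2 / π) * sin ((k + 1) * θ) := by
  rw [chebP, arccos_cos hθ.1 hθ.2]
  rcases eq_or_ne (sin θ) 0 with h | h
  · -- at `θ = 0, π` both sides vanish: `chebP` divides by `sin θ = 0`, and `U_k(cos θ) sin θ = 0`
    have := U_real_cos θ k
    simp_all
  · field_simp

lemma chebP_mul_chebP_cos_mul_sin_sq (i j : ℕ) {θ : ℝ} (hθ : θ ∈ Icc 0 π) :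
    chebP i (cos θ) * chebP j (cos θ) * sin θ ^ 2 =
      2 / π * (sin ((i + 1) * θ) * sin ((j + 1) * θ)) := by
  rw [show chebP i (cos θ) * chebP j (cos θ) * sin θ ^ 2 =
      (chebP i (cos θ) * sin θ) * (chebP j (cos θ) * sin θ) by ring,
    chebP_cos_mul_sin i hθ, chebP_cos_mul_sin j hθ, mul_mul_mul_comm,
    mul_self_sqrt (by positivity)]

lemma iprod_chebP_comb (a b c d : ℝ) (i i' j j' : ℕ) :
    iprod (fun x => a * chebP i x + b * chebP i' x) (fun x => c * chebP j x + d * chebP j' x) =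
      a * c * (if i = j then 1 else 0) + a * d * (if i = j' then 1 else 0) +
        b * c * (if i' = j then 1 else 0) + b * d * (if i' = j' then 1 else 0) := by
  have expand : ∀ θ ∈ uIcc 0 π,
      (a * chebP i (cos θ) + b * chebP i' (cos θ)) * (c * chebP j (cos θ) + d * chebP j' (cos θ)) *
          sin θ ^ 2 =
        2 / π * (a * c * (sin ((i + 1) * θ) * sin ((j + 1) * θ)) +
          a * d * (sin ((i + 1) * θ) * sin ((j' + 1) * θ)) +
          b * c * (sin ((i' + 1) * θ) * sin ((j + 1) * θ)) +
          b * d * (sin ((i' + 1) * θ) * sin ((j' + 1) * θ))) := by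
    intro θ hθ
    rw [uIcc_of_le pi_pos.le] at hθ
    have h (k l : ℕ) := chebP_mul_chebP_cos_mul_sin_sq k l hθ
    linear_combination a * c * h i j + a * d * h i j' + b * c * h i' j + b * d * h i' j'
  have normalize : ∀ k l : ℕ, 2 / π * (if k = l then π / 2 else 0) = if k = l then 1 else 0 := by
    intro k l
    split_ifs
    · field_simp
    · rw [mul_zero]
  rw [iprod, integral_mul_sqrt_one_sub_sq_eq_integral_cos, integral_congr expand,
    integral_const_mul, integral_add, integral_add, integral_add]
  · simp only [integral_const_mul, integral_sin_mul_sin, ← normalize]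
    ring
  all_goals exact Continuous.intervalIntegrable (by fun_prop) _ _

lemma iprod_chebP (i j : ℕ) : iprod (chebP i) (chebP j) = if i = j then 1 else 0 := by
  simpa using iprod_chebP_comb 1 0 1 0 i i j j

lemma vpQ_of_le {n m j : ℕ} (h : j ≤ n - m) : vpQ n m j = chebP j := by
  funext x
  simp [vpQ, h]

lemma vpQ_of_lt {n m j : ℕ} (h : n - m < j) :
    vpQ n m j = fun x => ((m : ℝ) + n - j) / (2 * m) * chebP j x +
      -(((m : ℝ) - n + j) / (2 * m)) * chebP (2 * n - j) x := by
  funext x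
  simp [vpQ, not_le.mpr h, sub_eq_add_neg]

lemma exists_vpQ_eq_comb (n m j : ℕ) :
    ∃ a b : ℝ, vpQ n m j = fun x => a * chebP j x + b * chebP (2 * n - j) x := by
  rcases le_or_gt j (n - m) with h | h
  · exact ⟨1, 0, by simp [vpQ_of_le h]⟩
  · exact ⟨_, _, vpQ_of_lt h⟩

theorem vpQ_orthogonality_general (n m : ℕ) :
    (∀ i j, i < n → j < n → i ≠ j → iprod (vpQ n m i) (vpQ n m j) = 0) ∧
    (∀ j, j ≤ n - m → iprod (vpQ n m j) (vpQ n m j) = 1) ∧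
    (∀ j, n - m < j → j < n →
      iprod (vpQ n m j) (vpQ n m j) = ((m : ℝ) ^ 2 + ((n : ℝ) - j) ^ 2) / (2 * (m : ℝ) ^ 2)) := by
  refine ⟨fun i j hi hj hij => ?_, fun j hj => ?_, fun j hj hjn => ?_⟩
  · obtain ⟨a, b, hqi⟩ := exists_vpQ_eq_comb n m i
    obtain ⟨c, d, hqj⟩ := exists_vpQ_eq_comb n m j
    rw [hqi, hqj, iprod_chebP_comb]
    simp [hij, show i ≠ 2 * n - j by omega, show 2 * n - i ≠ j by omega,
      show 2 * n - i ≠ 2 * n - j by omega]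
  · rw [vpQ_of_le hj, iprod_chebP, if_pos rfl]
  · have hm : (m : ℝ) ≠ 0 := by norm_cast; omega
    rw [vpQ_of_lt hj, iprod_chebP_comb]
    simp only [if_true, if_neg (show j ≠ 2 * n - j by omega),
      if_neg (show 2 * n - j ≠ j by omega)]
    field_simp
    ring

theorem vpQ_orthogonality (n m : ℕ) (hm : 0 < m) (hmn : m < n) :
    (∀ i j, i < n → j < n → i ≠ j → iprod (vpQ n m i) (vpQ n m j) = 0) ∧
    (∀ j, j ≤ n - m → iprod (vpQ n m j) (vpQ n m j) = 1) ∧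
    (∀ j, n - m < j → j < n →
      iprod (vpQ n m j) (vpQ n m j) = ((m : ℝ) ^ 2 + ((n : ℝ) - j) ^ 2) / (2 * (m : ℝ) ^ 2)) :=
  vpQ_orthogonality_general n m
end

section
/- For 0 < m < n, the fundamental VP polynomial admits the basis change Φ_{n,k}^m(x) = λ_k ∑_{j=0}^{n−1} p_j(x_k) q_{n,j}^m(x), where q_{n,j}^m = p_j for j ≤ n−m and q_{n,j}^m = ((m+n−j)/(2m)) p_j − ((m−n+j)/(2m)) p_{2n−j} for n−m < j < n. -/
/-!
At a node `x_k = cos θ`, `θ = kπ/(n+1)`, one has `(2n - j + 1) θ = 2kπ - (j + 1) θ`, hence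
`p_{2n-j}(x_k) = -p_j(x_k)` and `p_n(x_k) = 0`. Reflecting the tail `n < j < n + m` of the sum
defining `Φ` onto `n - m < j < n` and regrouping, the term of index `j` and the reflected one
combine into `p_j(x_k) q_j(x)`.
-/

open Finset Real

lemma chebP_cos {θ : ℝ} (h₀ : 0 ≤ θ) (hπ : θ ≤ π) (j : ℕ) :
    chebP j (cos θ) = √(2 / π) * sin ((j + 1) * θ) / sin θ := by
  rw [chebP, arccos_cos h₀ hπ]

lemma chebNode_angle_mem_Icc {n k : ℕ} (hk : k ≤ n + 1) :
    k * π / (n + 1) ∈ Set.Icc 0 π := by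
  have hk' : (k : ℝ) ≤ n + 1 := by exact_mod_cast hk
  constructor
  · positivity
  · rw [div_le_iff₀ (by positivity)]
    nlinarith [pi_pos]

lemma chebP_chebNode_self {n k : ℕ} (hk : k ≤ n + 1) : chebP n (chebNode n k) = 0 := by
  obtain ⟨h₀, hπ⟩ := chebNode_angle_mem_Icc hk
  have hangle : ((n : ℝ) + 1) * (k * π / (n + 1)) = k * π := by field_simp
  rw [chebNode, chebP_cos h₀ hπ, hangle, sin_nat_mul_pi, mul_zero, zero_div]

lemma chebP_two_mul_sub_chebNode {n k j : ℕ} (hk : k ≤ n + 1) (hj : j ≤ 2 * n) :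
    chebP (2 * n - j) (chebNode n k) = -chebP j (chebNode n k) := by
  obtain ⟨h₀, hπ⟩ := chebNode_angle_mem_Icc hk
  have hangle : (((2 * n - j : ℕ) : ℝ) + 1) * (k * π / (n + 1)) =
      k * (2 * π) - (j + 1) * (k * π / (n + 1)) := by
    rw [Nat.cast_sub hj]
    field_simp
    push_cast
    ring
  rw [chebNode, chebP_cos h₀ hπ, chebP_cos h₀ hπ, hangle, sin_nat_mul_two_pi_sub]
  ring

lemma vpQ_of_le_sub {n m j : ℕ} (h : j ≤ n - m) (x : ℝ) :
    vpQ n m j x = vpFilter n m j * chebP j x := by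
  simp [vpQ, vpFilter, h]

lemma vpQ_of_sub_lt {n m j : ℕ} (h₁ : n - m < j) (h₂ : j < n) (x : ℝ) :
    vpQ n m j x =
      vpFilter n m j * chebP j x - vpFilter n m (2 * n - j) * chebP (2 * n - j) x := by
  have hm : (m : ℝ) ≠ 0 := by exact_mod_cast (show m ≠ 0 by omega)
  rw [vpQ, vpFilter, vpFilter, if_neg h₁.not_ge, if_neg (by omega), if_neg (by omega),
    Nat.cast_sub (by omega)]
  push_cast
  field_simp
  ring

noncomputable def vpPhiTerm (n m k : ℕ) (x : ℝ) (j : ℕ) : ℝ :=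
  vpFilter n m j * chebP j (chebNode n k) * chebP j x

lemma vpPhi_eq_sum_vpPhiTerm (n m k : ℕ) (x : ℝ) :
    vpPhi n m k x = chebWeight n k * ∑ j ∈ range (n + m), vpPhiTerm n m k x j :=
  rfl

lemma chebP_chebNode_mul_vpQ {n m k j : ℕ} (hk : k ≤ n + 1) (h₁ : n - m < j) (h₂ : j < n)
    (x : ℝ) :
    chebP j (chebNode n k) * vpQ n m j x =
      vpPhiTerm n m k x j + vpPhiTerm n m k x (2 * n - j) := by
  rw [vpQ_of_sub_lt h₁ h₂, vpPhiTerm, vpPhiTerm,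
    chebP_two_mul_sub_chebNode hk (by omega : j ≤ 2 * n)]
  ring

lemma sum_range_vpPhiTerm {n m k : ℕ} (hm : 0 < m) (hmn : m ≤ n) (hk : k ≤ n + 1) (x : ℝ) :
    ∑ j ∈ range (n + m), vpPhiTerm n m k x j =
      ∑ j ∈ range n, vpPhiTerm n m k x j +
        ∑ j ∈ Ico (n - m + 1) n, vpPhiTerm n m k x (2 * n - j) := by
  have hnode : vpPhiTerm n m k x n = 0 := by
    rw [vpPhiTerm, chebP_chebNode_self hk, mul_zero, zero_mul]
  have hreflect := sum_Ico_reflect (vpPhiTerm n m k x) (n - m + 1) (show n ≤ 2 * n + 1 by omega)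
  rw [show 2 * n + 1 - n = n + 1 by omega, show 2 * n + 1 - (n - m + 1) = n + m by omega]
    at hreflect
  rw [hreflect, ← sum_range_add_sum_Ico _ (show n ≤ n + m by omega),
    sum_eq_sum_Ico_succ_bot (by omega), hnode, zero_add]

lemma sum_range_chebP_chebNode_mul_vpQ {n m k : ℕ} (hk : k ≤ n + 1) (x : ℝ) :
    ∑ j ∈ range n, chebP j (chebNode n k) * vpQ n m j x =
      ∑ j ∈ range n, vpPhiTerm n m k x j +
        ∑ j ∈ Ico (n - m + 1) n, vpPhiTerm n m k x (2 * n - j) := by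
  set G := fun j ↦ chebP j (chebNode n k) * vpQ n m j x
  have hlow : ∀ j ∈ range n, j ∉ Ico (n - m + 1) n → G j - vpPhiTerm n m k x j = 0 := by
    intro j hjn hj
    have hjm : j ≤ n - m := by
      rw [mem_range] at hjn
      rw [mem_Ico] at hj
      omega
    simp only [G, vpQ_of_le_sub hjm, vpPhiTerm]
    ring
  have hband : ∀ j ∈ Ico (n - m + 1) n,
      G j - vpPhiTerm n m k x j = vpPhiTerm n m k x (2 * n - j) := by
    intro j hj
    rw [mem_Ico] at hj
    simp only [G, chebP_chebNode_mul_vpQ hk (by omega : n - m < j) hj.2]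
    ring
  calc ∑ j ∈ range n, G j
      = ∑ j ∈ range n, (vpPhiTerm n m k x j + (G j - vpPhiTerm n m k x j)) := by
        simp only [add_sub_cancel]
    _ = ∑ j ∈ range n, vpPhiTerm n m k x j +
          ∑ j ∈ Ico (n - m + 1) n, (G j - vpPhiTerm n m k x j) := by
        rw [sum_add_distrib, sum_subset (fun j hj ↦ mem_range.2 (mem_Ico.1 hj).2) hlow]
    _ = _ := by rw [sum_congr rfl hband]

theorem vpPhi_basis_change (n m : ℕ) (hm : 0 < m) (hmn : m < n) :
    ∀ k, 1 ≤ k → k ≤ n → ∀ x : ℝ,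
      vpPhi n m k x =
        chebWeight n k * ∑ j ∈ Finset.range n, chebP j (chebNode n k) * vpQ n m j x := by
  intro k _ hk x
  have hk' : k ≤ n + 1 := by omega
  rw [vpPhi_eq_sum_vpPhiTerm, sum_range_vpPhiTerm hm hmn.le hk',
    sum_range_chebP_chebNode_mul_vpQ hk']
end
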